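/- arXiv:1807.08238 — 8 statements merged into one kernel-verified Lean document; each statement's English description precedes it below -/
import Mathlib

section
/- Let W be a real symmetric n×n matrix such that x W xᵀ ≥ 1 for every nonzero row vector x ∈ ℤⁿ. Then W is positive definite (i.e., x W xᵀ > 0 for every nonzero x ∈ ℝⁿ). -/
/-!
Scaling shows that `x ↦ x W xᵀ` is nonnegative on rational vectors, hence, by density and
continuity, `W` is positive semidefinite. If `y W yᵀ = 0` for some `y ≠ 0`, then `W y = 0`, so the
form is invariant under translation along the line `ℝ y`. By simultaneous Diophantine
approximation this line passes arbitrarily close to nonzero integer vectors `p`, and then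
`p W pᵀ` is close to `0`, contradicting `p W pᵀ ≥ 1`.
-/

open Matrix

variable {ι R : Type*}

theorem dotProduct_mulVec_smul_self [Fintype ι] [CommSemiring R] (W : Matrix ι ι R) (c : R)
    (u : ι → R) : (c • u) ⬝ᵥ W *ᵥ (c • u) = c ^ 2 * (u ⬝ᵥ W *ᵥ u) := by
  simp only [mulVec_smul, dotProduct_smul, smul_dotProduct, smul_eq_mul]
  ring

theorem dotProduct_mulVec_add_smul_of_mulVec_eq_zero [Fintype ι] [CommSemiring R]
    {W : Matrix ι ι R} (hW : W.IsSymm) {y : ι → R} (hy : W *ᵥ y = 0) (v : ι → R) (c : R) :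
    (v + c • y) ⬝ᵥ W *ᵥ (v + c • y) = v ⬝ᵥ W *ᵥ v := by
  have hyW : y ᵥ* W = 0 := by rw [← mulVec_transpose, hW.eq, hy]
  rw [mulVec_add, mulVec_smul, hy, smul_zero, add_zero, add_dotProduct, smul_dotProduct,
    dotProduct_mulVec y, hyW, zero_dotProduct, smul_zero, add_zero]

theorem exists_int_mul_ratCast_eq_intCast [Finite ι] (r : ι → ℚ) :
    ∃ d : ℤ, d ≠ 0 ∧ ∃ x : ι → ℤ, ∀ i, (x i : ℝ) = d * r i := by
  obtain ⟨⟨d, hd⟩, hdr⟩ := IsLocalization.exist_integer_multiples_of_finite (nonZeroDivisors ℤ) r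
  choose x hx using hdr
  refine ⟨d, nonZeroDivisors.coe_ne_zero ⟨d, hd⟩, x, fun i => ?_⟩
  simpa using congrArg ((↑) : ℚ → ℝ) (hx i)

theorem dotProduct_mulVec_nonneg_of_intVec [Fintype ι] {W : Matrix ι ι ℝ}
    (hint : ∀ x : ι → ℤ, x ≠ 0 →
      1 ≤ (fun i => (x i : ℝ)) ⬝ᵥ W *ᵥ (fun i => (x i : ℝ))) (y : ι → ℝ) :
    0 ≤ y ⬝ᵥ W *ᵥ y := by
  have hint₀ (x : ι → ℤ) : 0 ≤ (fun i => (x i : ℝ)) ⬝ᵥ W *ᵥ (fun i => (x i : ℝ)) := by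
    rcases eq_or_ne x 0 with rfl | hx
    · simp
    · exact zero_le_one.trans (hint x hx)
  have hdense : DenseRange (Pi.map fun (_ : ι) (q : ℚ) => (q : ℝ)) :=
    DenseRange.piMap fun _ => Rat.denseRange_cast
  refine hdense.induction_on y (isClosed_le continuous_const (by fun_prop)) fun r => ?_
  obtain ⟨d, hd, x, hx⟩ := exists_int_mul_ratCast_eq_intCast r
  have hxr : (fun i => (x i : ℝ)) = (d : ℝ) • Pi.map (fun _ (q : ℚ) => (q : ℝ)) r := by
    ext i
    simp [hx]
  have hd₀ := hint₀ x
  rw [hxr, dotProduct_mulVec_smul_self] at hd₀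
  exact nonneg_of_mul_nonneg_right hd₀ (by positivity)

theorem exists_dist_fract_lt [Fintype ι] (y : ι → ℝ) {ε : ℝ} (hε : 0 < ε) :
    ∃ a b : ℕ, a < b ∧
      dist (fun i => Int.fract (b * y i)) (fun i => Int.fract (a * y i)) < ε := by
  have hu : ∀ k : ℕ, (fun i => Int.fract (k * y i)) ∈ Set.univ.pi fun _ => Set.Icc (0 : ℝ) 1 :=
    fun k i _ => ⟨Int.fract_nonneg _, (Int.fract_lt_one _).le⟩
  obtain ⟨_, _, φ, hφ, hlim⟩ := (isCompact_univ_pi fun _ => isCompact_Icc).tendsto_subseq hu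
  obtain ⟨N, hN⟩ := Metric.cauchySeq_iff'.mp hlim.cauchySeq ε hε
  exact ⟨φ N, φ (N + 1), hφ N.lt_succ_self, hN (N + 1) N.le_succ⟩

theorem exists_intVec_near_zsmul [Fintype ι] (y : ι → ℝ) {ε : ℝ} (hε : 0 < ε) :
    ∃ q : ℤ, q ≠ 0 ∧ ∃ p : ι → ℤ, ‖(fun i => (p i : ℝ)) - (q : ℝ) • y‖ < ε := by
  obtain ⟨a, b, hab, hdist⟩ := exists_dist_fract_lt y hε
  refine ⟨b - a, by omega, fun i => ⌊b * y i⌋ - ⌊a * y i⌋, ?_⟩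
  have hfract : (fun i => Int.fract (a * y i)) - (fun i => Int.fract (b * y i)) =
      (fun i => ((⌊b * y i⌋ - ⌊a * y i⌋ : ℤ) : ℝ)) - ((b - a : ℤ) : ℝ) • y := by
    ext i
    simp only [Pi.sub_apply, Pi.smul_apply, smul_eq_mul, Int.fract]
    push_cast
    ring
  rwa [dist_comm, dist_eq_norm, hfract] at hdist

theorem exists_ne_zero_intVec_near_smul [Fintype ι] {y : ι → ℝ} (hy : y ≠ 0) {ε : ℝ}
    (hε : 0 < ε) : ∃ c : ℝ, ∃ p : ι → ℤ, p ≠ 0 ∧ ‖(fun i => (p i : ℝ)) - c • y‖ < ε := by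
  obtain ⟨q, hq, p, hp⟩ := exists_intVec_near_zsmul y (lt_min hε (norm_pos_iff.mpr hy))
  refine ⟨q, p, ?_, hp.trans_le (min_le_left _ _)⟩
  rintro rfl
  have hqy : ‖y‖ ≤ ‖(q : ℝ) • y‖ := by
    rw [norm_smul]
    exact le_mul_of_one_le_left (norm_nonneg y) (by rw [Real.norm_eq_abs]; exact_mod_cast Int.one_le_abs hq)
  have hp' : ‖(q : ℝ) • y‖ < ‖y‖ := by
    simpa [← Pi.zero_def] using hp.trans_le (min_le_right _ _)
  exact hp'.not_ge hqy

/-- A real symmetric matrix `W` with `x W xᵀ ≥ 1` for every nonzero integer vector `x`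
is positive definite. -/
theorem integral_posDef_is_posDef (n : ℕ) (W : Matrix (Fin n) (Fin n) ℝ)
    (hsymm : W.IsSymm)
    (hint : ∀ x : Fin n → ℤ, x ≠ 0 →
      1 ≤ (fun i => (x i : ℝ)) ⬝ᵥ W.mulVec (fun i => (x i : ℝ))) :
    ∀ y : Fin n → ℝ, y ≠ 0 → 0 < y ⬝ᵥ W.mulVec y := by
  intro y hy
  have hnonneg := dotProduct_mulVec_nonneg_of_intVec hint
  refine (hnonneg y).lt_of_ne fun hzero => ?_
  have hpsd : W.PosSemidef :=
    .of_dotProduct_mulVec_nonneg (isHermitian_iff_isSymm.mpr hsymm) (by simpa using hnonneg)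
  have hWy : W *ᵥ y = 0 := (hpsd.dotProduct_mulVec_zero_iff y).mp (by simpa using hzero.symm)
  obtain ⟨δ, hδ, hsmall⟩ : ∃ δ > 0, ∀ v : Fin n → ℝ, dist v 0 < δ → v ⬝ᵥ W *ᵥ v < 1 :=
    Metric.eventually_nhds_iff.mp <|
      ((by fun_prop : Continuous fun v : Fin n → ℝ => v ⬝ᵥ W *ᵥ v).tendsto 0).eventually
        (gt_mem_nhds (by simp))
  obtain ⟨c, p, hp, hnear⟩ := exists_ne_zero_intVec_near_smul hy hδ
  have hQp := hint p hp
  rw [← sub_add_cancel (fun i => (p i : ℝ)) (c • y),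
    dotProduct_mulVec_add_smul_of_mulVec_eq_zero hsymm hWy] at hQp
  exact (hsmall _ (by rwa [dist_zero_right])).not_ge hQp
end

section
/- Let A and B be real positive semidefinite (symmetric) n×n matrices and let P be an n×n permutation matrix such that AP = PA. Then tr(ABP) ≤ tr(AB). -/
/-!
Permutation matrices are unitary, so it suffices to treat a unitary `U` commuting with `A`.
Then `U A Uᴴ = A`, and since `(U - 1) A (U - 1)ᴴ` is positive semidefinite, the trace of its
product with `B` is nonnegative; by cyclicity of the trace that trace is
`2 tr(AB) - 2 Re tr(ABU)`.
-/

open Matrix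
open scoped ComplexOrder

namespace Matrix

variable {ι 𝕜 : Type*} [Fintype ι] [DecidableEq ι] [RCLike 𝕜]

open scoped MatrixOrder in
theorem PosSemidef.trace_mul_nonneg {A B : Matrix ι ι 𝕜} (hA : A.PosSemidef)
    (hB : B.PosSemidef) : 0 ≤ (A * B).trace := by
  have hsqrt : (CFC.sqrt B)ᴴ = CFC.sqrt B := (CFC.sqrt_nonneg B).posSemidef.isHermitian.eq
  calc 0 ≤ (CFC.sqrt B * A * (CFC.sqrt B)ᴴ).trace :=
        (hA.mul_mul_conjTranspose_same _).trace_nonneg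
    _ = (A * (CFC.sqrt B * CFC.sqrt B)).trace := by
        rw [hsqrt, trace_mul_cycle, trace_mul_comm]
    _ = (A * B).trace := by rw [CFC.sqrt_mul_sqrt_self B hB.nonneg]

theorem permMatrix_mem_unitaryGroup (σ : Equiv.Perm ι) :
    σ.permMatrix 𝕜 ∈ unitaryGroup ι 𝕜 := by
  rw [mem_unitaryGroup_iff, star_eq_conjTranspose, conjTranspose_permMatrix, ← permMatrix_mul,
    inv_mul_cancel, permMatrix_one]

theorem PosSemidef.re_trace_mul_mul_unitary_le {A B U : Matrix ι ι 𝕜} (hA : A.PosSemidef)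
    (hB : B.PosSemidef) (hU : U ∈ unitaryGroup ι 𝕜) (hAU : Commute A U) :
    RCLike.re (A * B * U).trace ≤ RCLike.re (A * B).trace := by
  have hUAU : U * A * Uᴴ = A := by
    rw [← hAU.eq, Matrix.mul_assoc, ← star_eq_conjTranspose, mem_unitaryGroup_iff.mp hU,
      Matrix.mul_one]
  have hUAB : (U * A * B).trace = (A * B * U).trace := (trace_mul_cycle A B U).symm
  have hAUB : (A * Uᴴ * B).trace = star (A * B * U).trace := by
    rw [← trace_conjTranspose, conjTranspose_mul, conjTranspose_mul, hA.isHermitian.eq,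
      hB.isHermitian.eq, ← Matrix.mul_assoc, trace_mul_cycle Uᴴ B A]
  have hexpand : (U - 1) * A * (U - 1)ᴴ * B
      = U * A * Uᴴ * B - U * A * B - A * Uᴴ * B + A * B := by
    simp only [conjTranspose_sub, conjTranspose_one, Matrix.sub_mul, Matrix.mul_sub,
      Matrix.one_mul, Matrix.mul_one]
    noncomm_ring
  have key := (hA.mul_mul_conjTranspose_same (U - 1)).trace_mul_nonneg hB
  rw [hexpand, hUAU, trace_add, trace_sub, trace_sub, hUAB, hAUB] at key
  have key_re := (RCLike.nonneg_iff.mp key).1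
  simp only [map_add, map_sub, RCLike.star_def, RCLike.conj_re] at key_re
  linarith

end Matrix

/-- If `A` and `B` are real positive semidefinite `n × n` matrices and `P` is a permutation
matrix commuting with `A`, then `tr(ABP) ≤ tr(AB)`. -/
theorem trace_perm_le (n : ℕ) (A B P : Matrix (Fin n) (Fin n) ℝ)
    (hA : A.PosSemidef) (hB : B.PosSemidef)
    (hP : ∃ σ : Equiv.Perm (Fin n), P = σ.permMatrix ℝ)
    (hcomm : A * P = P * A) :
    (A * B * P).trace ≤ (A * B).trace := by
  obtain ⟨σ, rfl⟩ := hP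
  exact hA.re_trace_mul_mul_unitary_le hB (permMatrix_mem_unitaryGroup σ) hcomm
end

section
/- Let A and B be real positive definite (symmetric) n×n matrices and let P be an n×n permutation matrix such that AP = PA. Then tr(ABP) = tr(AB) if and only if P is the identity matrix. -/
/-!
Let `S = √A`. Since `P` commutes with `A`, it commutes with `S`, so by cyclicity of the trace
`tr(ABP) = tr(CP)` and `tr(AB) = tr(C)` with `C = SBS` positive definite. If `P` is the matrix
of `σ`, then `tr(CP) = ∑ᵢ C i (σ⁻¹ i)`, and positive definiteness gives
`2 C i j < C i i + C j j` for `i ≠ j`; summing over `i` shows `tr(CP) < tr(C)` unless `σ = 1`.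
-/

open Matrix
open scoped MatrixOrder

lemma Commute.cfcSqrt_left {A : Type*} [PartialOrder A] [Ring A] [StarRing A]
    [TopologicalSpace A] [StarOrderedRing A] [Algebra ℝ A]
    [ContinuousFunctionalCalculus ℝ A IsSelfAdjoint] [NonnegSpectrumClass ℝ A]
    [IsTopologicalRing A] [T2Space A] {a b : A} (h : Commute a b) :
    Commute (CFC.sqrt a) b :=
  CFC.sqrt_eq_cfc (a := a) ▸ h.cfc_nnreal NNReal.sqrt

namespace Matrix

variable {n : Type*}

lemma permMatrix_eq_one_iff [DecidableEq n] {R : Type*} [Zero R] [One R] [NeZero (1 : R)]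
    {σ : Equiv.Perm n} : σ.permMatrix R = 1 ↔ σ = 1 := by
  refine ⟨fun h => Equiv.ext fun i => ?_, fun h => h ▸ permMatrix_one⟩
  simpa [one_apply, eq_comm] using congrFun (congrFun h i) (σ i)

variable [Fintype n]

lemma trace_mul_self_mul_mul {R : Type*} [CommSemiring R] {S P : Matrix n n R}
    (h : Commute S P) (B : Matrix n n R) : (S * S * B * P).trace = (S * B * S * P).trace := by
  rw [Matrix.mul_assoc, Matrix.mul_assoc, trace_mul_comm, Matrix.mul_assoc, Matrix.mul_assoc,
    ← h.eq]
  simp only [Matrix.mul_assoc]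

variable [DecidableEq n]

lemma trace_mul_permMatrix {R : Type*} [NonAssocSemiring R] (C : Matrix n n R)
    (σ : Equiv.Perm n) : (C * σ.permMatrix R).trace = ∑ i, C i (σ.symm i) := by
  simp [trace, PEquiv.mul_toMatrix_toPEquiv]

open scoped ComplexOrder in
lemma PosDef.mul_mul_same {𝕜 : Type*} [RCLike 𝕜] {B S : Matrix n n 𝕜} (hB : B.PosDef)
    (hS : S.PosDef) : (S * B * S).PosDef := by
  have := hB.conjTranspose_mul_mul_same (mulVec_injective_iff_isUnit.mpr hS.isUnit)
  rwa [hS.isHermitian.eq] at this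

lemma PosDef.two_mul_apply_lt_add {C : Matrix n n ℝ} (hC : C.PosDef) {i j : n} (hij : i ≠ j) :
    2 * C i j < C i i + C j j := by
  set x : n → ℝ := Pi.single i 1 - Pi.single j 1
  have hx : x ≠ 0 := fun h => by simpa [x, hij] using congrFun h i
  have hquad : star x ⬝ᵥ C *ᵥ x = C i i + C j j - 2 * C i j := by
    have hsymm : C j i = C i j := hC.isHermitian.apply i j
    simp [x, mulVec_sub, sub_dotProduct, dotProduct_sub, hsymm]
    ring
  linarith [hC.dotProduct_mulVec_pos hx]

lemma PosDef.trace_mul_permMatrix_lt {C : Matrix n n ℝ} (hC : C.PosDef) {σ : Equiv.Perm n}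
    (hσ : σ ≠ 1) : (C * σ.permMatrix ℝ).trace < C.trace := by
  obtain ⟨k, hk⟩ : ∃ k, σ.symm k ≠ k := by
    by_contra! h
    exact hσ (Equiv.ext fun i => by simpa using (congrArg σ (h i)).symm)
  have hle : ∀ i, 2 * C i (σ.symm i) ≤ C i i + C (σ.symm i) (σ.symm i) := fun i => by
    rcases eq_or_ne i (σ.symm i) with h | h
    · rw [← h]; linarith
    · exact (hC.two_mul_apply_lt_add h).le
  have hlt : ∑ i, 2 * C i (σ.symm i) < ∑ i, (C i i + C (σ.symm i) (σ.symm i)) :=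
    Finset.sum_lt_sum (fun i _ => hle i) ⟨k, Finset.mem_univ k, hC.two_mul_apply_lt_add hk.symm⟩
  rw [Finset.sum_add_distrib, Equiv.sum_comp σ.symm (fun i => C i i), ← Finset.mul_sum] at hlt
  rw [trace_mul_permMatrix, trace]
  simp only [diag_apply]
  linarith

lemma PosDef.trace_mul_permMatrix_eq_trace_iff {C : Matrix n n ℝ} (hC : C.PosDef)
    {σ : Equiv.Perm n} : (C * σ.permMatrix ℝ).trace = C.trace ↔ σ = 1 := by
  refine ⟨fun h => ?_, fun h => by rw [h, permMatrix_one, Matrix.mul_one]⟩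
  by_contra hσ
  exact (hC.trace_mul_permMatrix_lt hσ).ne h

end Matrix

/-- If `A` and `B` are real positive definite `n × n` matrices and `P` is a permutation
matrix commuting with `A`, then `tr(ABP) = tr(AB)` if and only if `P = 1`. -/
theorem trace_perm_eq_iff (n : ℕ) (A B P : Matrix (Fin n) (Fin n) ℝ)
    (hA : A.PosDef) (hB : B.PosDef)
    (hP : ∃ σ : Equiv.Perm (Fin n), P = σ.permMatrix ℝ)
    (hcomm : A * P = P * A) :
    (A * B * P).trace = (A * B).trace ↔ P = 1 := by
  obtain ⟨σ, rfl⟩ := hP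
  set S := CFC.sqrt A
  have hSS : S * S = A := CFC.sqrt_mul_sqrt_self A hA.posSemidef.nonneg
  have hC : (S * B * S).PosDef := hB.mul_mul_same hA.isStrictlyPositive.sqrt.posDef
  have htrP : (A * B * σ.permMatrix ℝ).trace = (S * B * S * σ.permMatrix ℝ).trace := by
    simpa only [hSS] using trace_mul_self_mul_mul (S := S) (Commute.cfcSqrt_left hcomm) B
  have htr : (A * B).trace = (S * B * S).trace := by
    simpa only [hSS, Matrix.mul_one] using trace_mul_self_mul_mul (Commute.one_right S) B
  rw [htrP, htr, hC.trace_mul_permMatrix_eq_trace_iff, permMatrix_eq_one_iff]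
end

section
/- Let W be a real symmetric n×n matrix with x W xᵀ ≥ 1 for every nonzero x ∈ ℤⁿ, and let P be an n×n permutation matrix with WP = PW. For m ≥ 1 define the mn×mn block tridiagonal matrix W_m whose m diagonal blocks all equal W, whose superdiagonal blocks all equal −(1/2)PW, whose subdiagonal blocks all equal −(1/2)PᵀW, and whose other blocks are zero. Then x W_m xᵀ ≥ 1 for every nonzero x ∈ ℤ^{mn}. -/
/-!
Pad the rows of `x` to `y₀ = 0, y₁, …, y_m, y_{m+1} = 0` and write `q u = u ⬝ᵥ W *ᵥ u`.
Since `P` is orthogonal and commutes with the symmetric `W`, the quadratic form of `W_m`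
telescopes to `½ ∑_{i ≤ m} q (Pᵀ yᵢ - y_{i+1})`, and every `Pᵀ yᵢ - y_{i+1}` is an integer
vector. If `x ≠ 0`, the difference just before the first nonzero row and the one at the last
nonzero row are both nonzero (the latter because `Pᵀ` is injective), so two summands are at
least `1` and none is negative.
-/

open Matrix Finset

/-- The block tridiagonal matrix `W_m` with diagonal blocks `W`, superdiagonal blocks
`-(1/2) P W` and subdiagonal blocks `-(1/2) Pᵀ W`. -/
noncomputable def blockTridiag (m n : ℕ) (W P : Matrix (Fin n) (Fin n) ℝ) :
    Matrix (Fin m × Fin n) (Fin m × Fin n) ℝ :=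
  Matrix.of fun x y =>
    if (x.1 : ℕ) = (y.1 : ℕ) then W x.2 y.2
    else if (x.1 : ℕ) + 1 = (y.1 : ℕ) then -(1 / 2) * (P * W) x.2 y.2
    else if (y.1 : ℕ) + 1 = (x.1 : ℕ) then -(1 / 2) * (Pᵀ * W) x.2 y.2
    else 0

theorem two_le_card_filter_ne {α : Type*} [Zero α] [DecidableEq α] {f : α → α}
    (hf : Function.Injective f) (hf0 : f 0 = 0) {y : ℕ → α} {m : ℕ} (h0 : y 0 = 0)
    (hm : ∀ i, m < i → y i = 0) (hy : ∃ i, y i ≠ 0) :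
    2 ≤ #{i ∈ range (m + 1) | f (y i) ≠ y (i + 1)} := by
  set i₀ := Nat.find hy
  have hi₀ : y i₀ ≠ 0 := Nat.find_spec hy
  have hi₀m : i₀ ≤ m := by
    by_contra! h
    exact hi₀ (hm _ h)
  have hi₀pos : i₀ ≠ 0 := fun h => hi₀ (h ▸ h0)
  set j₀ := Nat.findGreatest (fun i => y i ≠ 0) m
  have hj₀ : y j₀ ≠ 0 := Nat.findGreatest_spec (P := fun i => y i ≠ 0) hi₀m hi₀
  have hij : i₀ ≤ j₀ := Nat.le_findGreatest hi₀m hi₀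
  have hj₀m : j₀ ≤ m := Nat.findGreatest_le m
  have hbefore : y (i₀ - 1) = 0 := not_not.mp (Nat.find_min hy (by omega))
  have hafter : y (j₀ + 1) = 0 := by
    by_cases h : j₀ + 1 ≤ m
    · exact not_not.mp (Nat.findGreatest_is_greatest (Nat.lt_succ_self _) h)
    · exact hm _ (by omega)
  calc 2 = #{i₀ - 1, j₀} := (card_pair (by omega)).symm
    _ ≤ _ := card_le_card fun i hi => by
      simp only [mem_insert, mem_singleton] at hi
      rcases hi with rfl | rfl <;> simp only [mem_filter, mem_range]
      · refine ⟨by omega, ?_⟩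
        rw [hbefore, hf0, Nat.sub_add_cancel (Nat.pos_of_ne_zero hi₀pos)]
        exact hi₀.symm
      · refine ⟨by omega, ?_⟩
        rw [hafter, ← hf0]
        exact hf.ne hj₀

theorem card_filter_ne_zero_le_sum {ι α : Type*} [Zero α] [DecidableEq α] (s : Finset ι)
    (e : ι → α) {q : α → ℝ} (hq₀ : q 0 = 0) (hq₁ : ∀ u, u ≠ 0 → 1 ≤ q u) :
    (#{i ∈ s | e i ≠ 0} : ℝ) ≤ ∑ i ∈ s, q (e i) := by
  have hq : ∀ u, 0 ≤ q u := fun u => by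
    by_cases hu : u = 0
    · rw [hu, hq₀]
    · exact zero_le_one.trans (hq₁ u hu)
  calc (#{i ∈ s | e i ≠ 0} : ℝ) = ∑ i ∈ s with e i ≠ 0, 1 := by simp
    _ ≤ ∑ i ∈ s with e i ≠ 0, q (e i) :=
      sum_le_sum fun i hi => hq₁ _ (mem_filter.mp hi).2
    _ ≤ ∑ i ∈ s, q (e i) :=
      sum_le_sum_of_subset_of_nonneg (filter_subset _ _) fun i _ _ => hq _

theorem sum_range_sum_range_ite_succ {M : Type*} [AddCommMonoid M] (m : ℕ) (F : ℕ → ℕ → M)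
    (hF : ∀ i, F i m = 0) :
    ∑ i ∈ range m, ∑ j ∈ range m, (if i + 1 = j then F i j else 0) =
      ∑ i ∈ range m, F i (i + 1) := by
  refine sum_congr rfl fun i hi => ?_
  rw [sum_ite_eq]
  split_ifs with h
  · rfl
  · rw [show i + 1 = m by simp only [mem_range] at hi h; omega, hF]

theorem sum_range_sum_range_ite_succ' {M : Type*} [AddCommMonoid M] (m : ℕ) (F : ℕ → ℕ → M)
    (hF : ∀ i, F m i = 0) :
    ∑ i ∈ range m, ∑ j ∈ range m, (if j + 1 = i then F i j else 0) =
      ∑ j ∈ range m, F (j + 1) j := by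
  rw [sum_comm]
  exact sum_range_sum_range_ite_succ m (fun j i => F i j) hF

theorem dotProduct_comp_mulVec {ι κ R : Type*} [Fintype ι] [Fintype κ] [CommSemiring R]
    (B : Matrix ι ι (Matrix κ κ R)) (x : ι × κ → R) :
    x ⬝ᵥ comp ι ι κ κ R B *ᵥ x =
      ∑ i, ∑ j, (fun a => x (i, a)) ⬝ᵥ B i j *ᵥ (fun b => x (j, b)) := by
  simp only [dotProduct, mulVec, comp_apply, Fintype.sum_prod_type, mul_sum]
  exact sum_congr rfl fun i _ => sum_comm

section OrthogonalCommuting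

variable {ι R : Type*} [Fintype ι] [CommRing R] {W P : Matrix ι ι R}

theorem dotProduct_transpose_mul_mulVec (hW : W.IsSymm) (hWP : W * P = P * W) (u v : ι → R) :
    v ⬝ᵥ (Pᵀ * W) *ᵥ u = u ⬝ᵥ (P * W) *ᵥ v := by
  rw [show Pᵀ * W = (W * P)ᵀ by rw [transpose_mul, hW.eq], dotProduct_transpose_mulVec, hWP]

theorem dotProduct_transpose_mulVec_sub [DecidableEq ι] (hW : W.IsSymm) (hP : P * Pᵀ = 1)
    (hWP : W * P = P * W) (u v : ι → R) :
    (Pᵀ *ᵥ u - v) ⬝ᵥ W *ᵥ (Pᵀ *ᵥ u - v) =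
      u ⬝ᵥ W *ᵥ u + v ⬝ᵥ W *ᵥ v - 2 * (u ⬝ᵥ (P * W) *ᵥ v) := by
  have hPWP : P * W * Pᵀ = W := by rw [← hWP, Matrix.mul_assoc, hP, Matrix.mul_one]
  have hadj : ∀ w, (Pᵀ *ᵥ u) ⬝ᵥ w = u ⬝ᵥ P *ᵥ w := fun w => by
    rw [mulVec_transpose, dotProduct_mulVec]
  have hsymm : v ⬝ᵥ W *ᵥ (Pᵀ *ᵥ u) = (Pᵀ *ᵥ u) ⬝ᵥ W *ᵥ v := by
    rw [dotProduct_mulVec, ← mulVec_transpose, hW.eq, dotProduct_comm]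
  rw [mulVec_sub, sub_dotProduct, dotProduct_sub, dotProduct_sub, hsymm, hadj, hadj,
    mulVec_mulVec, mulVec_mulVec, mulVec_mulVec, hPWP]
  ring

end OrthogonalCommuting

theorem half_sum_range_dotProduct_transpose_mulVec_sub {ι : Type*} [Fintype ι] [DecidableEq ι]
    {W P : Matrix ι ι ℝ} (hW : W.IsSymm) (hP : P * Pᵀ = 1) (hWP : W * P = P * W) {m : ℕ}
    {y : ℕ → ι → ℝ} (h0 : y 0 = 0) (hm : y (m + 1) = 0) :
    (1 / 2) * ∑ i ∈ range (m + 1),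
        (Pᵀ *ᵥ y i - y (i + 1)) ⬝ᵥ W *ᵥ (Pᵀ *ᵥ y i - y (i + 1)) =
      ∑ i ∈ range m, y (i + 1) ⬝ᵥ W *ᵥ y (i + 1)
        - ∑ i ∈ range m, y (i + 1) ⬝ᵥ (P * W) *ᵥ y (i + 2) := by
  simp only [dotProduct_transpose_mulVec_sub hW hP hWP, sum_sub_distrib, sum_add_distrib,
    ← mul_sum]
  rw [sum_range_succ' (fun i => y i ⬝ᵥ W *ᵥ y i),
    sum_range_succ (fun i => y (i + 1) ⬝ᵥ W *ᵥ _),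
    sum_range_succ' (fun i => y i ⬝ᵥ (P * W) *ᵥ y (i + 1)), h0, hm]
  simp only [zero_dotProduct, add_zero]
  ring

/-- The sequence `0, x₁, …, x_m, 0, 0, …` of rows of `x`. -/
def paddedRows {R : Type*} [Zero R] {m n : ℕ} (x : Fin m × Fin n → R) : ℕ → Fin n → R
  | 0 => 0
  | i + 1 => if h : i < m then fun a => x (⟨i, h⟩, a) else 0

namespace paddedRows

variable {R : Type*} [Zero R] {m n : ℕ}

theorem eq_zero_of_lt (x : Fin m × Fin n → R) {i : ℕ} (hi : m < i) : paddedRows x i = 0 := by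
  obtain ⟨i, rfl⟩ : ∃ j, i = j + 1 := ⟨i - 1, by omega⟩
  simp [paddedRows, show ¬ i < m by omega]

theorem exists_ne_zero {x : Fin m × Fin n → R} (hx : x ≠ 0) : ∃ i, paddedRows x i ≠ 0 := by
  obtain ⟨⟨i, a⟩, h⟩ := Function.ne_iff.mp hx
  exact ⟨i + 1, fun h0 => h (by simpa [paddedRows] using congrFun h0 a)⟩

theorem intCast (x : Fin m × Fin n → ℤ) (i : ℕ) :
    paddedRows (fun p => (x p : ℝ)) i = fun a => ((paddedRows x i a : ℤ) : ℝ) := by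
  funext a
  cases i with
  | zero => simp [paddedRows]
  | succ i => by_cases h : i < m <;> simp [paddedRows, h]

end paddedRows

noncomputable def tridiagBlock {n : ℕ} (W P : Matrix (Fin n) (Fin n) ℝ) (i j : ℕ) :
    Matrix (Fin n) (Fin n) ℝ :=
  (if i = j then W else 0) + (if i + 1 = j then -(1 / 2 : ℝ) • (P * W) else 0) +
    (if j + 1 = i then -(1 / 2 : ℝ) • (Pᵀ * W) else 0)

theorem blockTridiag_eq_comp (m n : ℕ) (W P : Matrix (Fin n) (Fin n) ℝ) :
    blockTridiag m n W P = comp _ _ _ _ ℝ (of fun i j : Fin m => tridiagBlock W P i j) := by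
  ext ⟨i, a⟩ ⟨j, b⟩
  simp only [blockTridiag, tridiagBlock, comp_apply, of_apply, Matrix.add_apply]
  split_ifs <;> first | omega | simp

theorem sum_sum_dotProduct_tridiagBlock_mulVec {m n : ℕ} (W P : Matrix (Fin n) (Fin n) ℝ)
    {y : ℕ → Fin n → ℝ} (hy : y (m + 1) = 0) :
    ∑ i ∈ range m, ∑ j ∈ range m, y (i + 1) ⬝ᵥ tridiagBlock W P i j *ᵥ y (j + 1) =
      ∑ i ∈ range m, y (i + 1) ⬝ᵥ W *ᵥ y (i + 1)
        - (1 / 2) * ∑ i ∈ range m, y (i + 1) ⬝ᵥ (P * W) *ᵥ y (i + 2)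
        - (1 / 2) * ∑ i ∈ range m, y (i + 2) ⬝ᵥ (Pᵀ * W) *ᵥ y (i + 1) := by
  have hblock : ∀ i j, y (i + 1) ⬝ᵥ tridiagBlock W P i j *ᵥ y (j + 1) =
      (if i = j then y (i + 1) ⬝ᵥ W *ᵥ y (j + 1) else 0)
        + (if i + 1 = j then -(1 / 2) * (y (i + 1) ⬝ᵥ (P * W) *ᵥ y (j + 1)) else 0)
        + (if j + 1 = i then -(1 / 2) * (y (i + 1) ⬝ᵥ (Pᵀ * W) *ᵥ y (j + 1)) else 0) := by
    intro i j
    simp only [tridiagBlock]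
    split_ifs <;>
      first | omega | simp [neg_mulVec, dotProduct_neg, smul_mulVec, dotProduct_smul]
  simp only [hblock, sum_add_distrib]
  rw [sum_range_sum_range_ite_succ m _ (fun i => by simp [hy]),
    sum_range_sum_range_ite_succ' m _ (fun i => by simp [hy]), ← mul_sum, ← mul_sum]
  simp only [sum_ite_eq, mem_range]
  rw [sum_ite_of_true fun i hi => mem_range.mp hi]
  ring

theorem dotProduct_blockTridiag_mulVec {m n : ℕ} {W P : Matrix (Fin n) (Fin n) ℝ}
    (hW : W.IsSymm) (hP : P * Pᵀ = 1) (hWP : W * P = P * W) (x : Fin m × Fin n → ℝ) :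
    x ⬝ᵥ blockTridiag m n W P *ᵥ x =
      (1 / 2) * ∑ i ∈ range (m + 1),
        (Pᵀ *ᵥ paddedRows x i - paddedRows x (i + 1)) ⬝ᵥ
          W *ᵥ (Pᵀ *ᵥ paddedRows x i - paddedRows x (i + 1)) := by
  have hm : paddedRows x (m + 1) = 0 := paddedRows.eq_zero_of_lt x (by omega)
  rw [half_sum_range_dotProduct_transpose_mulVec_sub hW hP hWP rfl hm, blockTridiag_eq_comp,
    dotProduct_comp_mulVec]
  have hrow : ∀ i : Fin m, (fun a => x (i, a)) = paddedRows x (i + 1) := fun i => by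
    simp [paddedRows]
  calc _ = ∑ i ∈ range m, ∑ j ∈ range m,
        paddedRows x (i + 1) ⬝ᵥ tridiagBlock W P i j *ᵥ paddedRows x (j + 1) := by
        simp only [of_apply, hrow, sum_range]
    _ = _ := by
      rw [sum_sum_dotProduct_tridiagBlock_mulVec W P hm]
      simp only [dotProduct_transpose_mul_mulVec hW hWP]
      ring

theorem permMatrix_transpose_mulVec_intCast_sub {ι : Type*} [Fintype ι] [DecidableEq ι]
    (σ : Equiv.Perm ι) (u v : ι → ℤ) :
    (σ.permMatrix ℝ)ᵀ *ᵥ (fun a => (u a : ℝ)) - (fun a => (v a : ℝ)) =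
      fun a => ((u ∘ ⇑σ⁻¹ - v) a : ℝ) := by
  rw [transpose_permMatrix, permMatrix_mulVec]
  funext a
  simp

theorem blockTridiag_integral_posDef_general (m n : ℕ)
    (W P : Matrix (Fin n) (Fin n) ℝ)
    (hsymm : W.IsSymm)
    (hint : ∀ x : Fin n → ℤ, x ≠ 0 →
      1 ≤ (fun i => (x i : ℝ)) ⬝ᵥ W.mulVec (fun i => (x i : ℝ)))
    (hP : ∃ σ : Equiv.Perm (Fin n), P = σ.permMatrix ℝ)
    (hcomm : W * P = P * W) :
    ∀ x : Fin m × Fin n → ℤ, x ≠ 0 →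
      1 ≤ (fun i => (x i : ℝ)) ⬝ᵥ (blockTridiag m n W P).mulVec (fun i => (x i : ℝ)) := by
  obtain ⟨σ, rfl⟩ := hP
  intro x hx
  have hPP : σ.permMatrix ℝ * (σ.permMatrix ℝ)ᵀ = 1 := by
    rw [transpose_permMatrix, ← permMatrix_mul, inv_mul_cancel, permMatrix_one]
  set e : ℕ → Fin n → ℤ := fun i => paddedRows x i ∘ ⇑σ⁻¹ - paddedRows x (i + 1)
  have hform :
      (fun i => (x i : ℝ)) ⬝ᵥ blockTridiag m n W (σ.permMatrix ℝ) *ᵥ (fun i => (x i : ℝ)) =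
        (1 / 2) * ∑ i ∈ range (m + 1), (fun a => (e i a : ℝ)) ⬝ᵥ W *ᵥ (fun a => (e i a : ℝ)) := by
    rw [dotProduct_blockTridiag_mulVec hsymm hPP hcomm]
    simp only [paddedRows.intCast, permMatrix_transpose_mulVec_intCast_sub, e]
  have hcount : 2 ≤ #{i ∈ range (m + 1) | e i ≠ 0} := by
    simpa only [e, ne_eq, sub_eq_zero] using
      two_le_card_filter_ne (f := fun u => u ∘ ⇑σ⁻¹) σ⁻¹.surjective.injective_comp_right
        rfl rfl (fun i hi => paddedRows.eq_zero_of_lt x hi) (paddedRows.exists_ne_zero hx)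
  have hsum := card_filter_ne_zero_le_sum (range (m + 1)) e
    (q := fun u => (fun a => (u a : ℝ)) ⬝ᵥ W *ᵥ (fun a => (u a : ℝ))) (by simp) hint
  rw [hform]
  linarith [show (2 : ℝ) ≤ #{i ∈ range (m + 1) | e i ≠ 0} by exact_mod_cast hcount]

/-- If `W` is integral positive definite, symmetric and commutes with the permutation
matrix `P`, then the block tridiagonal matrix `W_m` is again integral positive definite. -/
theorem blockTridiag_integral_posDef (m n : ℕ) (hm : 1 ≤ m)
    (W P : Matrix (Fin n) (Fin n) ℝ)
    (hsymm : W.IsSymm)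
    (hint : ∀ x : Fin n → ℤ, x ≠ 0 →
      1 ≤ (fun i => (x i : ℝ)) ⬝ᵥ W.mulVec (fun i => (x i : ℝ)))
    (hP : ∃ σ : Equiv.Perm (Fin n), P = σ.permMatrix ℝ)
    (hcomm : W * P = P * W) :
    ∀ x : Fin m × Fin n → ℤ, x ≠ 0 →
      1 ≤ (fun i => (x i : ℝ)) ⬝ᵥ (blockTridiag m n W P).mulVec (fun i => (x i : ℝ)) :=
  blockTridiag_integral_posDef_general m n W P hsymm hint hP hcomm
end

section
/- Let Q be a k×l integer matrix every row of which is nonzero, and let W be a real l×l matrix such that x W xᵀ ≥ 1 for every nonzero x ∈ ℤˡ. Then k ≤ tr(W · QᵀQ). -/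
open Matrix

theorem Matrix.trace_mul_transpose_mul_eq_sum_dotProduct_mulVec {m n R : Type*} [Fintype m] [Fintype n]
    [CommSemiring R] (W : Matrix n n R) (Q : Matrix m n R) :
    (W * (Qᵀ * Q)).trace = ∑ i, Q i ⬝ᵥ W *ᵥ Q i := by
  rw [trace_mul_cycle']
  rfl

/-- If `Q` is a `k × l` integer matrix with nonzero rows and `W` satisfies the integral
positivity condition, then `k ≤ tr(W QᵀQ)`. -/
theorem card_le_trace_weighted (k l : ℕ)
    (Q : Matrix (Fin k) (Fin l) ℤ) (hQ : ∀ i : Fin k, Q i ≠ 0)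
    (W : Matrix (Fin l) (Fin l) ℝ)
    (hW : ∀ x : Fin l → ℤ, x ≠ 0 →
      1 ≤ (fun i => (x i : ℝ)) ⬝ᵥ W.mulVec (fun i => (x i : ℝ))) :
    (k : ℝ) ≤ (W * ((Q.map ((↑) : ℤ → ℝ))ᵀ * Q.map ((↑) : ℤ → ℝ))).trace := by
  rw [trace_mul_transpose_mul_eq_sum_dotProduct_mulVec]
  calc (k : ℝ) = ∑ _i : Fin k, (1 : ℝ) := by simp
    _ ≤ _ := Finset.sum_le_sum fun i _ => hW (Q i) (hQ i)
end

section
/- Let Q be a k×l integer matrix each of whose rows is nonzero, suppose C := QᵀQ is invertible, and let m > 0 be a real number such that x C⁻¹ xᵀ ≥ m for every nonzero x ∈ ℤˡ. Then k ≤ l/m. -/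
open Matrix

/-!
Summing the hypothesis over the rows `q` of `Q` (each a nonzero integer vector) gives
`k m ≤ ∑ q C⁻¹ qᵀ = tr (Q C⁻¹ Qᵀ) = tr (C⁻¹ QᵀQ) = tr 1 = l`.
-/

theorem Matrix.trace_mul_mul_transpose {ι n R : Type*} [Fintype ι] [Fintype n] [CommSemiring R]
    (A : Matrix ι n R) (W : Matrix n n R) :
    trace (A * W * Aᵀ) = ∑ i, A i ⬝ᵥ W *ᵥ A i :=
  Finset.sum_congr rfl fun _ _ => (dotProduct_mulVec _ _ _).symm

theorem Matrix.card_mul_le_trace_mul_transpose_mul {ι n R : Type*} [Fintype ι] [Fintype n]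
    [CommRing R] [PartialOrder R] [IsOrderedRing R]
    (A : Matrix ι n R) (W : Matrix n n R) {m : R} (h : ∀ i, m ≤ A i ⬝ᵥ W *ᵥ A i) :
    Fintype.card ι * m ≤ trace (W * (Aᵀ * A)) := by
  rw [← Matrix.mul_assoc, trace_mul_comm, ← Matrix.mul_assoc, trace_mul_mul_transpose]
  simpa using Finset.card_nsmul_le_sum Finset.univ _ m fun i _ => h i

/-- Brauer's bound: if `Q` is a `k × l` integer matrix with nonzero rows, `C = QᵀQ` is
invertible and `x C⁻¹ xᵀ ≥ m > 0` for all nonzero integer vectors `x`, then `k ≤ l/m`. -/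
theorem card_le_div_of_inv_cartan_bound (k l : ℕ)
    (Q : Matrix (Fin k) (Fin l) ℤ) (hQ : ∀ i : Fin k, Q i ≠ 0)
    (C : Matrix (Fin l) (Fin l) ℝ)
    (hC : C = (Q.map ((↑) : ℤ → ℝ))ᵀ * Q.map ((↑) : ℤ → ℝ))
    (hCinv : IsUnit C.det) (m : ℝ) (hm : 0 < m)
    (hbound : ∀ x : Fin l → ℤ, x ≠ 0 →
      m ≤ (fun i => (x i : ℝ)) ⬝ᵥ C⁻¹.mulVec (fun i => (x i : ℝ))) :
    (k : ℝ) ≤ l / m := by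
  have hsum := (Q.map ((↑) : ℤ → ℝ)).card_mul_le_trace_mul_transpose_mul C⁻¹
    fun i => hbound (Q i) (hQ i)
  rw [← hC, nonsing_inv_mul C hCinv, trace_one, Fintype.card_fin, Fintype.card_fin] at hsum
  rwa [le_div_iff₀ hm]
end

section
/- Let C be a symmetric l×l integer matrix and P an l×l permutation matrix with PC = CP. If a ∈ ℤˡ is a row vector with aP = −a, then a C aᵀ is even. -/
/-!
Modulo 2 the off-diagonal terms of `a C aᵀ` cancel in symmetric pairs and `a i ^ 2 ≡ a i`, so
`a C aᵀ ≡ ∑ i, C i i * a i`. Commuting with the permutation matrix of `σ` makes `C` invariant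
under `σ` on both indices, so the summand `C i i * a i` changes sign under `σ`, and an integer
sum invariant under reindexing that also changes sign is zero.
-/

open Finset

namespace Matrix

variable {n R : Type*} [Fintype n] [DecidableEq n]

theorem IsSymm.dotProduct_mulVec_self_of_charTwo [CommRing R] [CharP R 2] {C : Matrix n n R}
    (hC : C.IsSymm) (a : n → R) :
    a ⬝ᵥ C *ᵥ a = ∑ i, C i i * a i ^ 2 := by
  set g : n × n → R := fun p => a p.1 * C p.1 p.2 * a p.2
  have hoff : ∑ p ∈ univ.offDiag, g p = 0 := by
    refine sum_involution (fun p _ => p.swap) (fun p _ => ?_) (fun p hp _ h => ?_)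
      (fun p hp => ?_) (fun p _ => p.swap_swap)
    · have hswap : g p.swap = g p := by
        simp only [g, Prod.fst_swap, Prod.snd_swap, hC.apply]
        ring
      rw [hswap, CharTwo.add_self_eq_zero]
    · exact (mem_offDiag.mp hp).2.2 (congrArg Prod.snd h)
    · simpa [eq_comm] using hp
  calc a ⬝ᵥ C *ᵥ a = ∑ p ∈ univ ×ˢ univ, g p := by
        rw [univ_product_univ, Fintype.sum_prod_type]
        simp [g, dotProduct, mulVec, mul_sum, mul_assoc]
    _ = ∑ i, C i i * a i ^ 2 := by
        rw [← diag_union_offDiag, sum_union (disjoint_diag_offDiag _), sum_diag, hoff, add_zero]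
        exact sum_congr rfl fun i _ => by ring

theorem IsSymm.even_dotProduct_mulVec_self_iff {C : Matrix n n ℤ} (hC : C.IsSymm) (a : n → ℤ) :
    Even (a ⬝ᵥ C *ᵥ a) ↔ Even (∑ i, C i i * a i) := by
  let φ := Int.castRingHom (ZMod 2)
  have hmulVec : φ ∘ (C *ᵥ a) = C.map φ *ᵥ (φ ∘ a) := funext (φ.map_mulVec C a)
  have hcast : φ (a ⬝ᵥ C *ᵥ a) = φ (∑ i, C i i * a i) := by
    rw [RingHom.map_dotProduct, hmulVec, (hC.map φ).dotProduct_mulVec_self_of_charTwo]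
    simp [ZMod.pow_card]
  rw [← ZMod.intCast_eq_zero_iff_even, ← ZMod.intCast_eq_zero_iff_even]
  exact iff_of_eq (congrArg (· = 0) hcast)

theorem apply_perm_perm_of_commute_permMatrix [NonAssocSemiring R] {C : Matrix n n R}
    {σ : Equiv.Perm n} (h : Commute (σ.permMatrix R) C) (i j : n) :
    C (σ i) (σ j) = C i j := by
  have hsub : C.submatrix σ id = C.submatrix id σ.symm := by
    rw [← PEquiv.toMatrix_toPEquiv_mul, ← PEquiv.mul_toMatrix_toPEquiv]
    exact h
  simpa using congrFun (congrFun hsub i) (σ j)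

end Matrix

theorem Equiv.Perm.sum_eq_zero_of_apply_eq_neg {ι M : Type*} [Fintype ι] [AddCommGroup M]
    [IsAddTorsionFree M] {f : ι → M} (σ : Equiv.Perm ι) (h : ∀ i, f (σ i) = -f i) :
    ∑ i, f i = 0 :=
  self_eq_neg.mp <| calc
    ∑ i, f i = ∑ i, f (σ i) := (Equiv.sum_comp σ f).symm
    _ = -∑ i, f i := by simp only [h, sum_neg_distrib]

open Matrix

/-- If `C` is a symmetric integer matrix commuting with a permutation matrix `P` and
`a` is an integer row vector with `aP = -a`, then `a C aᵀ` is even. -/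
theorem even_of_negated_by_perm (l : ℕ) (C P : Matrix (Fin l) (Fin l) ℤ)
    (hsymm : C.IsSymm)
    (hP : ∃ σ : Equiv.Perm (Fin l), P = σ.permMatrix ℤ)
    (hcomm : P * C = C * P)
    (a : Fin l → ℤ) (ha : Matrix.vecMul a P = -a) :
    Even (a ⬝ᵥ C.mulVec a) := by
  obtain ⟨σ, rfl⟩ := hP
  have haσ (i : Fin l) : a (σ i) = -a i := by
    have hi := congrFun ha (σ i)
    simp only [vecMul_permMatrix, Function.comp_apply, Equiv.symm_apply_apply,
      Pi.neg_apply] at hi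
    exact neg_eq_iff_eq_neg.mp hi.symm
  have hdiag : ∑ i, C i i * a i = 0 := σ.sum_eq_zero_of_apply_eq_neg fun i => by
    rw [apply_perm_perm_of_commute_permMatrix hcomm, haσ, mul_neg]
  exact (hsymm.even_dotProduct_mulVec_self_iff a).mpr (hdiag ▸ Even.zero)
end

section
/- Let m ≥ 0 and a ≥ m + 2 be integers, let σ be the automorphism x ↦ 5^{2^m}·x of the cyclic group ℤ/2^aℤ, and let U = (ℤ/2^aℤ) ⋊ ⟨σ⟩ be the corresponding semidirect product. Then the commutator subgroup U′ of U equals the subgroup 2^{m+2}·(ℤ/2^aℤ) of the normal factor, U′ has order 2^{a−m−2} (which equals the order of σ), and the index |U : U′| equals 2^a. -/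
/-!
In `N ⋊ G` with `N` and `G` abelian, the commutator subgroup is the subgroup of `N` generated
by the differences `g • n - n`. When `G` is generated by multiplication by a unit `u` of
`ℤ/qℤ`, these differences form the ideal `(u - 1)`. Since `5^(2^m) - 1 = 2^(m+2) · (odd)`, for
`u = 5^(2^m)` and `q = 2^a` this ideal is `2^(m+2)ℤ/2^aℤ`, of order `2^(a-m-2)`, which is also
the order of `5^(2^m)` modulo `2^a`; the index follows from `|U| = 2^a · 2^(a-m-2)`.
-/

/-- The action of the unit group of `ZMod q` on `Multiplicative (ZMod q)` by
multiplication, as a homomorphism into the automorphism group. -/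
def zmodMulAut (q : ℕ) : (ZMod q)ˣ →* MulAut (Multiplicative (ZMod q)) where
  toFun u := AddEquiv.toMultiplicative (DistribMulAction.toAddAut (ZMod q)ˣ (ZMod q) u)
  map_one' := by ext x; simp
  map_mul' u v := by ext x; simp [mul_smul]

/-- The semidirect product `(ℤ/2^aℤ) ⋊ ⟨σ⟩` for an automorphism `σ` of `ℤ/2^aℤ`. -/
abbrev Ugrp (a : ℕ) (σ : MulAut (Multiplicative (ZMod (2 ^ a)))) :=
  Multiplicative (ZMod (2 ^ a)) ⋊[(Subgroup.zpowers σ).subtype] (Subgroup.zpowers σ)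

namespace SemidirectProduct

variable {N G : Type*} [Group G]

open scoped commutatorElement in
theorem commutatorElement_inr_inl [Group N] (φ : G →* MulAut N) (g : G) (n : N) :
    ⁅(inr g : N ⋊[φ] G), inl n⁆ = (inl (φ g n * n⁻¹) : N ⋊[φ] G) := by
  rw [commutatorElement_def, map_mul, inl_aut, ← map_inv, ← map_inv]

theorem inl_mul_inv_mem_commutator [Group N] (φ : G →* MulAut N) (g : G) (n : N) :
    (inl (φ g n * n⁻¹) : N ⋊[φ] G) ∈ commutator (N ⋊[φ] G) :=
  commutatorElement_inr_inl φ g n ▸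
    Subgroup.commutator_mem_commutator (Subgroup.mem_top _) (Subgroup.mem_top _)

open scoped IsMulCommutative in
/-- `N ⧸ K` and `G` are abelian quotients of `N ⋊[φ] G`, and the kernels of the two quotient
maps meet in `K`. -/
theorem commutator_le_map_inl [CommGroup N] [IsMulCommutative G]
    (φ : G →* MulAut N) {K : Subgroup N} (hK : ∀ g n, φ g n * n⁻¹ ∈ K) :
    commutator (N ⋊[φ] G) ≤ K.map inl := by
  let π : N ⋊[φ] G →* N ⧸ K := lift (QuotientGroup.mk' K) 1 fun g => by
    ext n
    simpa [QuotientGroup.eq, mul_comm] using K.inv_mem (hK g n)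
  intro x hx
  obtain ⟨n, rfl⟩ : x ∈ (inl : N →* N ⋊[φ] G).range :=
    range_inl_eq_ker_rightHom (φ := φ) ▸ Abelianization.commutator_subset_ker rightHom hx
  refine ⟨n, ?_, rfl⟩
  simpa [π] using Abelianization.commutator_subset_ker π hx

end SemidirectProduct

theorem Units.sub_one_dvd_zpow_sub_one {R : Type*} [CommRing R] (u : Rˣ) (z : ℤ) :
    (u : R) - 1 ∣ ((u ^ z : Rˣ) : R) - 1 := by
  obtain ⟨n, rfl | rfl⟩ := Int.eq_nat_or_neg z
  · simpa using sub_one_dvd_pow_sub_one (u : R) n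
  · have hinv : ((u ^ (-n : ℤ) : Rˣ) : R) * (u : R) ^ n = 1 := by
      rw [← Units.val_pow_eq_pow_val, ← Units.val_mul, ← zpow_natCast, ← zpow_add]
      simp
    have heq : ((u ^ (-n : ℤ) : Rˣ) : R) - 1 = -((u ^ (-n : ℤ) : Rˣ) : R) * ((u : R) ^ n - 1) := by
      linear_combination hinv
    exact heq ▸ (sub_one_dvd_pow_sub_one (u : R) n).mul_left _

namespace ZMod

theorem mem_zmultiples_iff_dvd {n : ℕ} {c y : ZMod n} :
    y ∈ AddSubgroup.zmultiples c ↔ c ∣ y := by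
  constructor
  · rintro ⟨z, rfl⟩
    exact ⟨z, by simp [mul_comm]⟩
  · rintro ⟨t, rfl⟩
    exact ⟨ZMod.cast t, by simp [mul_comm]⟩

theorem zmultiples_eq_of_associated {n : ℕ} {c d : ZMod n} (h : Associated c d) :
    AddSubgroup.zmultiples c = AddSubgroup.zmultiples d := by
  ext y
  simp only [mem_zmultiples_iff_dvd, h.dvd_iff_dvd_left]

theorem addOrderOf_pow_of_le {p k a : ℕ} (hp : p ≠ 0) (hk : k ≤ a) :
    addOrderOf ((p : ZMod (p ^ a)) ^ k) = p ^ (a - k) := by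
  rw [← Nat.cast_pow, addOrderOf_coe _ (pow_ne_zero _ hp),
    Nat.gcd_eq_right (pow_dvd_pow p hk), Nat.pow_div hk (Nat.pos_of_ne_zero hp)]

theorem orderOf_five_pow_two_pow {m a : ℕ} (h : m + 2 ≤ a) :
    orderOf ((5 : ZMod (2 ^ a)) ^ 2 ^ m) = 2 ^ (a - m - 2) := by
  obtain ⟨b, rfl⟩ : ∃ b, a = b + 2 := ⟨a - 2, by omega⟩
  have hmb : m ≤ b := by omega
  rw [orderOf_pow_of_dvd (pow_ne_zero _ two_ne_zero) (orderOf_five b ▸ pow_dvd_pow 2 hmb),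
    orderOf_five, Nat.pow_div hmb two_pos]
  congr 1
  omega

theorem associated_two_pow_five_pow_sub_one (m a : ℕ) :
    Associated ((2 : ZMod (2 ^ a)) ^ (m + 2)) ((5 : ZMod (2 ^ a)) ^ 2 ^ m - 1) := by
  -- `(1 + 4 · 1) ^ 2 ^ m = 1 + 2 ^ m · 4 · (1 + 2y)`
  obtain ⟨y, hy⟩ := exists_one_add_mul_pow_prime_pow_eq (R := ℕ) Nat.prime_two
    (u := 4) (v := 2) (by norm_num) (by norm_num) 1 m
  have hodd : Nat.Coprime (1 + 2 * y) (2 ^ a) :=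
    Nat.Coprime.pow_right a (Nat.coprime_two_right.2 (by simp))
  refine ⟨unitOfCoprime _ hodd, ?_⟩
  have h5 := congrArg (Nat.cast : ℕ → ZMod (2 ^ a)) hy
  push_cast at h5
  rw [coe_unitOfCoprime, h5]
  push_cast
  ring

end ZMod

theorem zmodMulAut_apply (q : ℕ) (u : (ZMod q)ˣ) (x : Multiplicative (ZMod q)) :
    zmodMulAut q u x = Multiplicative.ofAdd ((u : ZMod q) * x.toAdd) := rfl

theorem zmodMulAut_injective (q : ℕ) : Function.Injective (zmodMulAut q) := by
  intro u v h
  ext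
  simpa [zmodMulAut_apply] using congrArg (fun e => (e (Multiplicative.ofAdd 1)).toAdd) h

theorem toAdd_zmodMulAut_mul_inv (q : ℕ) (u : (ZMod q)ˣ) (x : Multiplicative (ZMod q)) :
    (zmodMulAut q u x * x⁻¹).toAdd = ((u : ZMod q) - 1) * x.toAdd := by
  rw [zmodMulAut_apply, toAdd_mul, toAdd_ofAdd, toAdd_inv]
  ring

theorem commutator_semidirectProduct_zpowers_zmodMulAut (q : ℕ) (u : (ZMod q)ˣ) :
    commutator (Multiplicative (ZMod q) ⋊[(Subgroup.zpowers (zmodMulAut q u)).subtype]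
        Subgroup.zpowers (zmodMulAut q u)) =
      (AddSubgroup.toSubgroup (AddSubgroup.zmultiples ((u : ZMod q) - 1))).map
        SemidirectProduct.inl := by
  apply le_antisymm
  · refine SemidirectProduct.commutator_le_map_inl _ fun ⟨g, hg⟩ x => ?_
    obtain ⟨z, rfl⟩ := Subgroup.mem_zpowers_iff.1 hg
    rw [Multiplicative.mem_toSubgroup, ZMod.mem_zmultiples_iff_dvd, Subgroup.subtype_apply,
      Subgroup.coe_mk, ← map_zpow, toAdd_zmodMulAut_mul_inv]
    exact (u.sub_one_dvd_zpow_sub_one z).mul_right _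
  · rw [Subgroup.map_le_iff_le_comap, ← OrderIso.le_symm_apply, AddSubgroup.zmultiples_le,
      Subgroup.mem_toAddSubgroup', Subgroup.mem_comap]
    have hgen := SemidirectProduct.inl_mul_inv_mem_commutator
      (Subgroup.zpowers (zmodMulAut q u)).subtype ⟨_, Subgroup.mem_zpowers _⟩ (.ofAdd 1)
    rwa [Subgroup.subtype_apply, ← ofAdd_toAdd (zmodMulAut q u _ * _),
      toAdd_zmodMulAut_mul_inv, toAdd_ofAdd, mul_one] at hgen

/-- For `σ : x ↦ 5^(2^m)·x` on `ℤ/2^aℤ` with `a ≥ m + 2`, the commutator subgroup of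
`U = (ℤ/2^aℤ) ⋊ ⟨σ⟩` is `2^(m+2)·(ℤ/2^aℤ)`, it has order `2^(a-m-2) = |⟨σ⟩|`, and
`|U : U′| = 2^a`. -/
theorem commutator_semidirect_five_pow (m a : ℕ) (ha : m + 2 ≤ a)
    (u : (ZMod (2 ^ a))ˣ) (hu : (u : ZMod (2 ^ a)) = 5 ^ 2 ^ m)
    (σ : MulAut (Multiplicative (ZMod (2 ^ a)))) (hσ : σ = zmodMulAut (2 ^ a) u) :
    commutator (Ugrp a σ) =
      Subgroup.map SemidirectProduct.inl
        (AddSubgroup.toSubgroup (AddSubgroup.zmultiples ((2 : ZMod (2 ^ a)) ^ (m + 2)))) ∧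
    Nat.card (commutator (Ugrp a σ)) = 2 ^ (a - m - 2) ∧
    Nat.card (commutator (Ugrp a σ)) = orderOf σ ∧
    (commutator (Ugrp a σ)).index = 2 ^ a := by
  subst hσ
  have hcomm : commutator (Ugrp a (zmodMulAut (2 ^ a) u)) = Subgroup.map SemidirectProduct.inl
      (AddSubgroup.toSubgroup (AddSubgroup.zmultiples ((2 : ZMod (2 ^ a)) ^ (m + 2)))) := by
    rw [commutator_semidirectProduct_zpowers_zmodMulAut, hu,
      ZMod.zmultiples_eq_of_associated (ZMod.associated_two_pow_five_pow_sub_one m a)]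
  have hcard : Nat.card (commutator (Ugrp a (zmodMulAut (2 ^ a) u))) = 2 ^ (a - m - 2) := by
    have h := ZMod.addOrderOf_pow_of_le two_ne_zero ha
    rw [Nat.cast_ofNat, ← Nat.sub_sub] at h
    rw [hcomm, Subgroup.card_map_of_injective SemidirectProduct.inl_injective]
    exact (Nat.card_zmultiples ((2 : ZMod (2 ^ a)) ^ (m + 2))).trans h
  have horder : orderOf (zmodMulAut (2 ^ a) u) = 2 ^ (a - m - 2) := by
    rw [orderOf_injective _ (zmodMulAut_injective _), ← orderOf_units, hu,
      ZMod.orderOf_five_pow_two_pow ha]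
  refine ⟨hcomm, hcard, hcard.trans horder.symm, ?_⟩
  have hindex := (commutator (Ugrp a (zmodMulAut (2 ^ a) u))).card_mul_index
  rw [SemidirectProduct.card, hcard, Nat.card_zpowers, horder, mul_comm] at hindex
  exact Nat.eq_of_mul_eq_mul_right (pow_pos two_pos _)
    (hindex.trans (congrArg (· * _) (Nat.card_zmod _)))
end
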